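/- arXiv:math/0610271 — 5 statements merged into one kernel-verified Lean document; each statement's English description precedes it below -/
import Mathlib

section
/- Let (X_j : j ≥ 1) be i.i.d. real random variables with E[exp(ν X_1)] < 1 for some ν > 0, and S_n = X_1 + ... + X_n, S_0 = 0. Then P(max_{n ≥ 0} S_n > x) = o(e^{-ν x}) as x → ∞. -/
/-!
By Chernoff's inequality restricted to the event itself,
`e^{ν x} P(S_n > x) ≤ E[e^{ν S_n}; S_n > x]`. For fixed `n` the right-hand side tends to `0`
as `x → ∞`, and it is bounded by `E[e^{ν S_n}] = E[e^{ν X_1}]^n`, which is summable in `n`.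
Dominated convergence for series and the union bound over `n` give the claim.
-/

open MeasureTheory ProbabilityTheory Filter Topology Real

section

variable {Ω : Type*} [MeasurableSpace Ω] {P : Measure Ω}

lemma measureReal_iUnion_le_tsum [IsFiniteMeasure P] {A : ℕ → Set Ω}
    (hA : Summable fun n => P.real (A n)) :
    P.real (⋃ n, A n) ≤ ∑' n, P.real (A n) := by
  refine ENNReal.toReal_le_of_le_ofReal (tsum_nonneg fun n => measureReal_nonneg) ?_
  calc P (⋃ n, A n) ≤ ∑' n, P (A n) := measure_iUnion_le A
    _ = ∑' n, ENNReal.ofReal (P.real (A n)) := by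
      simp only [ofReal_measureReal (measure_ne_top P _)]
    _ = ENNReal.ofReal (∑' n, P.real (A n)) :=
      (ENNReal.ofReal_tsum_of_nonneg (fun n => measureReal_nonneg) hA).symm

lemma exp_mul_mul_measureReal_lt_le_setIntegral [IsFiniteMeasure P] {Y : Ω → ℝ} {ν : ℝ}
    (hν : 0 ≤ ν) (hY : Measurable Y) (hint : Integrable (fun ω => exp (ν * Y ω)) P) (x : ℝ) :
    exp (ν * x) * P.real {ω | x < Y ω} ≤ ∫ ω in {ω | x < Y ω}, exp (ν * Y ω) ∂P :=
  setIntegral_ge_of_const_le_real (measurableSet_lt measurable_const hY) (measure_ne_top _ _)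
    (fun _ hω => exp_le_exp.mpr (mul_le_mul_of_nonneg_left (le_of_lt hω) hν))
    hint.integrableOn

lemma tendsto_setIntegral_lt_atTop {Y : Ω → ℝ} (hY : Measurable Y) {f : Ω → ℝ}
    (hf : Integrable f P) :
    Tendsto (fun x => ∫ ω in {ω | x < Y ω}, f ω ∂P) atTop (𝓝 0) := by
  have hempty : (⋂ x : ℝ, {ω | x < Y ω}) = ∅ :=
    Set.eq_empty_of_forall_notMem fun ω hω => lt_irrefl (Y ω) (Set.mem_iInter.mp hω (Y ω))
  simpa [hempty] using tendsto_setIntegral_of_antitone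
    (fun x => measurableSet_lt measurable_const hY)
    (fun x y hxy ω (hω : y < Y ω) => lt_of_le_of_lt hxy hω) ⟨0, hf.integrableOn⟩

theorem tendsto_exp_mul_measureReal_exists_lt [IsFiniteMeasure P] {Y : ℕ → Ω → ℝ} {ν : ℝ}
    (hν : 0 ≤ ν) (hY : ∀ n, Measurable (Y n))
    (hint : ∀ n, Integrable (fun ω => exp (ν * Y n ω)) P)
    (hsum : Summable fun n => mgf (Y n) P ν) :
    Tendsto (fun x => exp (ν * x) * P.real {ω | ∃ n, x < Y n ω}) atTop (𝓝 0) := by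
  set tail : ℝ → ℕ → ℝ := fun x n => ∫ ω in {ω | x < Y n ω}, exp (ν * Y n ω) ∂P
  have htail_nonneg (x : ℝ) (n : ℕ) : 0 ≤ tail x n :=
    setIntegral_nonneg (measurableSet_lt measurable_const (hY n)) fun ω _ => (exp_pos _).le
  have htail_le_mgf (x : ℝ) (n : ℕ) : tail x n ≤ mgf (Y n) P ν :=
    setIntegral_le_integral (hint n) (Eventually.of_forall fun ω => (exp_pos _).le)
  have hchernoff (x : ℝ) (n : ℕ) : exp (ν * x) * P.real {ω | x < Y n ω} ≤ tail x n :=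
    exp_mul_mul_measureReal_lt_le_setIntegral hν (hY n) (hint n) x
  have htail_tendsto : Tendsto (fun x => ∑' n, tail x n) atTop (𝓝 0) := by
    simpa using tendsto_tsum_of_dominated_convergence hsum
      (fun n => tendsto_setIntegral_lt_atTop (hY n) (hint n))
      (Eventually.of_forall fun x n => by
        rw [norm_of_nonneg (htail_nonneg x n)]; exact htail_le_mgf x n)
  refine squeeze_zero (fun x => mul_nonneg (exp_pos _).le measureReal_nonneg) (fun x => ?_)
    htail_tendsto
  have hsum_tail : Summable (tail x) :=
    hsum.of_nonneg_of_le (htail_nonneg x) (htail_le_mgf x)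
  have hsum_events : Summable fun n => exp (ν * x) * P.real {ω | x < Y n ω} :=
    hsum_tail.of_nonneg_of_le (fun n => mul_nonneg (exp_pos _).le measureReal_nonneg)
      (hchernoff x)
  have hunion : {ω | ∃ n, x < Y n ω} = ⋃ n, {ω | x < Y n ω} := by
    ext ω; simp
  calc exp (ν * x) * P.real {ω | ∃ n, x < Y n ω}
      ≤ exp (ν * x) * ∑' n, P.real {ω | x < Y n ω} := by
        rw [hunion]
        exact mul_le_mul_of_nonneg_left (measureReal_iUnion_le_tsum
          ((summable_mul_left_iff (exp_pos _).ne').mp hsum_events)) (exp_pos _).le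
    _ = ∑' n, exp (ν * x) * P.real {ω | x < Y n ω} := tsum_mul_left.symm
    _ ≤ ∑' n, tail x n := hsum_events.tsum_le_tsum (hchernoff x) hsum_tail

end

/-- `P(max_{n ≥ 0} S_n > x) = o(e^{-ν x})` as `x → ∞` for a random walk with i.i.d.
increments satisfying `E[exp (ν X)] < 1`, i.e. `e^{ν x} P(max_n S_n > x) → 0`. -/
theorem tail_max_random_walk_little_o
    {Ω : Type*} [MeasurableSpace Ω] (P : Measure Ω) [IsProbabilityMeasure P]
    (X : ℕ → Ω → ℝ) (hmeas : ∀ i, Measurable (X i))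
    (hindep : iIndepFun X P)
    (hident : ∀ i, IdentDistrib (X i) (X 0) P P)
    (ν : ℝ) (hν : 0 < ν)
    (hint : Integrable (fun ω => Real.exp (ν * X 0 ω)) P)
    (hlt : ∫ ω, Real.exp (ν * X 0 ω) ∂P < 1) :
    Tendsto (fun x : ℝ => Real.exp (ν * x) *
        (P {ω | ∃ n : ℕ, ∑ i ∈ Finset.range n, X i ω > x}).toReal)
      atTop (nhds 0) := by
  have hmgf (n : ℕ) : mgf (∑ i ∈ Finset.range n, X i) P ν = mgf (X 0) P ν ^ n := by
    rw [hindep.mgf_sum hmeas, Finset.prod_congr rfl fun i _ =>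
      mgf_congr_of_identDistrib (X i) (X 0) (hident i) ν, Finset.prod_const, Finset.card_range]
  have hint_sum (n : ℕ) :
      Integrable (fun ω => exp (ν * (∑ i ∈ Finset.range n, X i) ω)) P :=
    hindep.integrable_exp_mul_sum hmeas fun i _ =>
      ((hident i).comp (measurable_const_mul ν).exp).integrable_iff.mpr hint
  have hsum : Summable fun n => mgf (∑ i ∈ Finset.range n, X i) P ν := by
    simpa only [hmgf] using summable_geometric_of_lt_one mgf_nonneg hlt
  have key := tendsto_exp_mul_measureReal_exists_lt
    (Y := fun n => ∑ i ∈ Finset.range n, X i) hν.le (fun n => by fun_prop) hint_sum hsum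
  simp only [Finset.sum_apply] at key
  exact key
end

section
/- Let (X_j : j ≥ 1) be i.i.d. with E X_1 = μ ∈ (-∞, 0), S_0 = 0, S_n = X_1 + ... + X_n, and let (ξ_j : j ≥ 0) be an identically distributed (not necessarily independent) sequence with E[ξ_0^+] < ∞, where ξ^+ = max(ξ, 0). Then M_∞ = sup_{k ≥ 0} (S_k + ξ_k) < ∞ almost surely. -/
/-!
By the strong law of large numbers `S_n ≤ (μ/2) n` eventually, almost surely. Since the `ξ_n`
are identically distributed with `E ξ₀⁺ < ∞`, the series `∑ P(ξ_n > ε n)` is finite for every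
`ε > 0`, so by Borel–Cantelli `ξ_n ≤ (-μ/2) n` eventually, almost surely. Hence `S_n + ξ_n ≤ 0`
for all large `n`, and the supremum is a maximum over finitely many terms and `0`.
-/

open MeasureTheory ProbabilityTheory Filter Topology

section PerturbedRandomWalk

variable {Ω : Type*} [MeasurableSpace Ω] {P : Measure Ω}

theorem tsum_measure_const_mul_lt_lt_top [IsProbabilityMeasure P] {Y : Ω → ℝ}
    (hY : Integrable (fun ω => max (Y ω) 0) P) {ε : ℝ} (hε : 0 < ε) :
    ∑' n : ℕ, P {ω | ε * n < Y ω} < ⊤ := by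
  let _ : MeasureSpace Ω := ⟨P⟩
  have hfin := tsum_prob_mem_Ioi_lt_top (hY.div_const ε)
    (fun ω => div_nonneg (le_max_right (Y ω) 0) hε.le)
  refine lt_of_le_of_lt (ENNReal.tsum_le_tsum fun n => measure_mono fun ω hω => ?_) hfin
  have hYω : ε * n < max (Y ω) 0 := lt_of_lt_of_le hω (le_max_left _ _)
  exact (lt_div_iff₀ hε).2 (by linarith)

theorem ae_eventually_le_const_mul_of_identDistrib [IsProbabilityMeasure P]
    {ξ : ℕ → Ω → ℝ} {Y : Ω → ℝ} (hξ : ∀ n, IdentDistrib (ξ n) Y P P)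
    (hY : Integrable (fun ω => max (Y ω) 0) P) {ε : ℝ} (hε : 0 < ε) :
    ∀ᵐ ω ∂P, ∀ᶠ n : ℕ in atTop, ξ n ω ≤ ε * n := by
  have hsum : ∑' n : ℕ, P {ω | ε * n < ξ n ω} ≠ ⊤ := by
    have hlaw : ∀ n : ℕ, P {ω | ε * n < ξ n ω} = P {ω | ε * n < Y ω} := fun n =>
      (hξ n).measure_mem_eq measurableSet_Ioi
    simpa only [hlaw] using (tsum_measure_const_mul_lt_lt_top hY hε).ne
  filter_upwards [ae_eventually_notMem hsum] with ω hω
  simpa only [Set.mem_ofPred_eq, not_lt] using hω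

end PerturbedRandomWalk

theorem eventually_le_mul_of_tendsto_div {S : ℕ → ℝ} {μ c : ℝ}
    (hS : Tendsto (fun n : ℕ => S n / n) atTop (𝓝 μ)) (hc : μ < c) :
    ∀ᶠ n : ℕ in atTop, S n ≤ c * n := by
  filter_upwards [hS.eventually_lt_const hc, eventually_gt_atTop 0] with n hlt hn
  exact ((div_lt_iff₀ (Nat.cast_pos.2 hn)).1 hlt).le

theorem perturbed_random_walk_sup_finite_general
    {Ω : Type*} [MeasurableSpace Ω] (P : Measure Ω) [IsProbabilityMeasure P]
    (X : ℕ → Ω → ℝ) (ξ : ℕ → Ω → ℝ)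
    (hindep : iIndepFun X P)
    (hident : ∀ i, IdentDistrib (X i) (X 0) P P)
    (hXint : Integrable (X 0) P) (hdrift : ∫ ω, X 0 ω ∂P < 0)
    (hξident : ∀ j, IdentDistrib (ξ j) (ξ 0) P P)
    (hξint : Integrable (fun ω => max (ξ 0 ω) 0) P) :
    ∀ᵐ ω ∂P, BddAbove (Set.range fun k : ℕ =>
      (∑ i ∈ Finset.range k, X i ω) + ξ k ω) := by
  set μ := ∫ ω, X 0 ω ∂P
  have hSLLN := strong_law_ae_real X hXint (fun i j hij => hindep.indepFun hij) hident
  have hξsmall := ae_eventually_le_const_mul_of_identDistrib hξident hξint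
    (ε := -(μ / 2)) (by linarith)
  filter_upwards [hSLLN, hξsmall] with ω hS hξ
  refine (isBoundedUnder_of_eventually_le (a := 0) ?_).bddAbove_range
  filter_upwards [eventually_le_mul_of_tendsto_div hS (c := μ / 2) (by linarith), hξ]
    with n hSn hξn
  linarith

/-- For a negative-drift random walk with i.i.d. increments and an identically
distributed perturbation sequence with integrable positive part, the all-time
supremum `M_∞ = sup_k (S_k + ξ_k)` is finite almost surely. -/
theorem perturbed_random_walk_sup_finite
    {Ω : Type*} [MeasurableSpace Ω] (P : Measure Ω) [IsProbabilityMeasure P]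
    (X : ℕ → Ω → ℝ) (ξ : ℕ → Ω → ℝ)
    (hXmeas : ∀ i, Measurable (X i)) (hξmeas : ∀ j, Measurable (ξ j))
    (hindep : iIndepFun X P)
    (hident : ∀ i, IdentDistrib (X i) (X 0) P P)
    (hXint : Integrable (X 0) P) (hdrift : ∫ ω, X 0 ω ∂P < 0)
    (hξident : ∀ j, IdentDistrib (ξ j) (ξ 0) P P)
    (hξint : Integrable (fun ω => max (ξ 0 ω) 0) P) :
    ∀ᵐ ω ∂P, BddAbove (Set.range fun k : ℕ =>
      (∑ i ∈ Finset.range k, X i ω) + ξ k ω) :=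
  perturbed_random_walk_sup_finite_general P X ξ hindep hident hXint hdrift hξident hξint
end

section
/- Let (X_j : j ≥ 1) be i.i.d. with E X_1 = μ < 0, S_n the associated random walk, and let (ξ_j : j ≥ 0) be i.i.d. random variables (independent of nothing assumed). If M_∞ = sup_{k ≥ 0}(S_k + ξ_k) < ∞ almost surely, then E[ξ_0^+] < ∞. -/
/-!
Suppose `E[ξ₀⁺] = ∞`. For every `c > 0` the tail sum `∑ P(ξ₀ > n c)` then diverges, so by the
second Borel–Cantelli lemma, applied to the independent events `{ξₙ > n c}`, almost surely
`ξₙ > n c` for infinitely many `n`. By the strong law of large numbers `Sₙ ≥ (E X₁ - 1) n`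
eventually, so with `c = |E X₁ - 1| + 1` we get `Sₙ + ξₙ > n` infinitely often and the maximum
is infinite.
-/

open MeasureTheory ProbabilityTheory Filter Finset
open scoped ENNReal

section TailSum

variable {Ω : Type*} [MeasurableSpace Ω] {μ : Measure Ω}

lemma ENNReal.ofReal_le_tsum_ite_natCast_lt (y : ℝ) :
    ENNReal.ofReal y ≤ ∑' n : ℕ, if (n : ℝ) < y then 1 else 0 :=
  calc ENNReal.ofReal y ≤ (⌈y⌉₊ : ℝ≥0∞) := by
        rw [← ENNReal.ofReal_natCast]
        exact ENNReal.ofReal_le_ofReal (Nat.le_ceil y)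
    _ = ∑ n ∈ range ⌈y⌉₊, if (n : ℝ) < y then 1 else 0 := by
        rw [sum_ite_of_true fun n hn => Nat.lt_ceil.1 (mem_range.1 hn)]
        simp
    _ ≤ ∑' n : ℕ, if (n : ℝ) < y then 1 else 0 := ENNReal.sum_le_tsum _

lemma lintegral_ofReal_le_tsum_measure_natCast_lt {Y : Ω → ℝ} (hY : Measurable Y) :
    ∫⁻ ω, ENNReal.ofReal (Y ω) ∂μ ≤ ∑' n : ℕ, μ {ω | (n : ℝ) < Y ω} := by
  have hmeas (n : ℕ) : MeasurableSet {ω | (n : ℝ) < Y ω} := measurableSet_lt measurable_const hY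
  calc ∫⁻ ω, ENNReal.ofReal (Y ω) ∂μ
      ≤ ∫⁻ ω, ∑' n : ℕ, {ω | (n : ℝ) < Y ω}.indicator 1 ω ∂μ := by
        refine lintegral_mono fun ω => ?_
        simpa only [Set.indicator_apply, Set.mem_ofPred_eq, Pi.one_apply]
          using ENNReal.ofReal_le_tsum_ite_natCast_lt (Y ω)
    _ = ∑' n : ℕ, μ {ω | (n : ℝ) < Y ω} := by
        rw [lintegral_tsum fun n => (measurable_one.indicator (hmeas n)).aemeasurable]
        exact tsum_congr fun n => lintegral_indicator_one (hmeas n)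

lemma integrable_max_zero_of_tsum_measure_lt_ne_top {Y : Ω → ℝ} (hY : Measurable Y) {c : ℝ}
    (hc : 0 < c) (hsum : ∑' n : ℕ, μ {ω | n * c < Y ω} ≠ ∞) :
    Integrable (fun ω => max (Y ω) 0) μ := by
  have hlint : ∫⁻ ω, ENNReal.ofReal (Y ω / c) ∂μ ≠ ∞ := by
    refine ne_top_of_le_ne_top ?_ (lintegral_ofReal_le_tsum_measure_natCast_lt (hY.div_const c))
    simpa only [lt_div_iff₀ hc] using hsum
  have hint := (integrable_toReal_of_lintegral_ne_top
    (hY.div_const c).ennreal_ofReal.aemeasurable hlint).const_mul c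
  refine hint.congr (ae_of_all _ fun ω => ?_)
  simp only [ENNReal.toReal_ofReal', mul_max_of_nonneg _ _ hc.le, mul_div_cancel₀ _ hc.ne',
    mul_zero]

end TailSum

lemma ProbabilityTheory.iIndepFun.ae_frequently_mem_of_tsum_eq_top {Ω β : Type*} [MeasurableSpace Ω]
    [MeasurableSpace β] {μ : Measure Ω} {f : ℕ → Ω → β} (hf : ∀ n, Measurable (f n))
    (hind : iIndepFun f μ) {t : ℕ → Set β} (ht : ∀ n, MeasurableSet (t n))
    (hsum : ∑' n, μ (f n ⁻¹' t n) = ∞) :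
    ∀ᵐ ω ∂μ, ∃ᶠ n in atTop, f n ω ∈ t n := by
  have := hind.isProbabilityMeasure
  have hmeas (n : ℕ) : MeasurableSet (f n ⁻¹' t n) := hf n (ht n)
  have hsets : iIndepSet (fun n => f n ⁻¹' t n) μ :=
    (iIndepSet_iff_meas_biInter hmeas).2 fun _ =>
      hind.meas_biInter fun i _ => ⟨t i, ht i, rfl⟩
  have hlimsup : ∀ᵐ ω ∂μ, ω ∈ limsup (fun n => f n ⁻¹' t n) atTop :=
    ae_iff.2 <| (prob_compl_eq_zero_iff (.measurableSet_limsup hmeas)).2 <|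
      measure_limsup_eq_one hmeas hsets hsum
  filter_upwards [hlimsup] with ω hω
  exact mem_limsup_iff_frequently_mem.1 hω

lemma ae_frequently_mul_lt_of_not_integrable_max_zero {Ω : Type*} [MeasurableSpace Ω]
    {μ : Measure Ω} {ξ : ℕ → Ω → ℝ} (hmeas : ∀ n, Measurable (ξ n)) (hind : iIndepFun ξ μ)
    (hident : ∀ n, IdentDistrib (ξ n) (ξ 0) μ μ)
    (hni : ¬ Integrable (fun ω => max (ξ 0 ω) 0) μ) {c : ℝ} (hc : 0 < c) :
    ∀ᵐ ω ∂μ, ∃ᶠ n in atTop, n * c < ξ n ω := by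
  refine hind.ae_frequently_mem_of_tsum_eq_top (t := fun n => Set.Ioi (n * c)) hmeas
    (fun _ => measurableSet_Ioi) ?_
  by_contra hsum
  refine hni (integrable_max_zero_of_tsum_measure_lt_ne_top (hmeas 0) hc ?_)
  have hsame (n : ℕ) : μ (ξ n ⁻¹' Set.Ioi (n * c)) = μ {ω | n * c < ξ 0 ω} :=
    (hident n).measure_mem_eq measurableSet_Ioi
  rwa [tsum_congr hsame] at hsum

lemma ae_eventually_mul_lt_sum_range {Ω : Type*} [MeasurableSpace Ω] {μ : Measure Ω}
    {X : ℕ → Ω → ℝ} (hint : Integrable (X 0) μ) (hindep : Pairwise (Function.onFun (IndepFun · · μ) X))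
    (hident : ∀ i, IdentDistrib (X i) (X 0) μ μ) {a : ℝ} (ha : a < μ[X 0]) :
    ∀ᵐ ω ∂μ, ∀ᶠ n in atTop, a * n < ∑ i ∈ range n, X i ω := by
  filter_upwards [strong_law_ae_real X hint hindep hident] with ω hω
  filter_upwards [hω (Ioi_mem_nhds ha), eventually_gt_atTop 0] with n hn hn0
  exact (lt_div_iff₀ (by exact_mod_cast hn0)).1 hn

theorem perturbed_random_walk_sup_finite_implies_integrable_general
    {Ω : Type*} [MeasurableSpace Ω] (P : Measure Ω) [IsProbabilityMeasure P]
    (X : ℕ → Ω → ℝ) (ξ : ℕ → Ω → ℝ)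
    (hξmeas : ∀ j, Measurable (ξ j))
    (hindep : iIndepFun X P)
    (hident : ∀ i, IdentDistrib (X i) (X 0) P P)
    (hXint : Integrable (X 0) P)
    (hξindep : iIndepFun ξ P)
    (hξident : ∀ j, IdentDistrib (ξ j) (ξ 0) P P)
    (hfin : ∀ᵐ ω ∂P, BddAbove (Set.range fun k : ℕ =>
      (∑ i ∈ Finset.range k, X i ω) + ξ k ω)) :
    Integrable (fun ω => max (ξ 0 ω) 0) P := by
  by_contra hni
  set a := (∫ ω, X 0 ω ∂P) - 1
  have hwalk := ae_eventually_mul_lt_sum_range hXint (fun i j hij => hindep.indepFun hij) hident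
    (sub_one_lt _)
  have hpeaks := ae_frequently_mul_lt_of_not_integrable_max_zero hξmeas hξindep hξident hni
    (c := |a| + 1) (by positivity)
  have hcontra : ∀ᵐ ω ∂P, False := by
    filter_upwards [hfin, hwalk, hpeaks] with ω ⟨B, hB⟩ hS hξ
    obtain ⟨n, hξn, hSn, hnB⟩ :=
      (hξ.and_eventually (hS.and (eventually_ge_atTop ⌈B⌉₊))).exists
    have hBn := hB ⟨n, rfl⟩
    have hB_le : B ≤ n := (Nat.le_ceil B).trans (by exact_mod_cast hnB)
    nlinarith [neg_abs_le a, Nat.cast_nonneg (α := ℝ) n]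
  exact hcontra.exists.elim fun _ => id

/-- Converse: if the all-time maximum of a perturbed random walk (negative-drift
i.i.d. increments, i.i.d. perturbations) is finite almost surely, then the
positive part of the perturbation is integrable. -/
theorem perturbed_random_walk_sup_finite_implies_integrable
    {Ω : Type*} [MeasurableSpace Ω] (P : Measure Ω) [IsProbabilityMeasure P]
    (X : ℕ → Ω → ℝ) (ξ : ℕ → Ω → ℝ)
    (hXmeas : ∀ i, Measurable (X i)) (hξmeas : ∀ j, Measurable (ξ j))
    (hindep : iIndepFun X P)
    (hident : ∀ i, IdentDistrib (X i) (X 0) P P)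
    (hXint : Integrable (X 0) P) (hdrift : ∫ ω, X 0 ω ∂P < 0)
    (hξindep : iIndepFun ξ P)
    (hξident : ∀ j, IdentDistrib (ξ j) (ξ 0) P P)
    (hfin : ∀ᵐ ω ∂P, BddAbove (Set.range fun k : ℕ =>
      (∑ i ∈ Finset.range k, X i ω) + ξ k ω)) :
    Integrable (fun ω => max (ξ 0 ω) 0) P :=
  perturbed_random_walk_sup_finite_implies_integrable_general P X ξ hξmeas hindep hident hXint
    hξindep hξident hfin
end

section
/- Under the assumptions of the integral equation u* = b + T u* for the tail of the maximum of a perturbed random walk with i.i.d. pairs ((ξ_j, X_{j+1})), the solution is given by the Neumann series u* = ∑_{n=0}^∞ T^n b, where T^0 is the identity. -/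
/-!
Split the event `{M_∞ > x}` according to the first step `n` at which the perturbed walk
`S_k + ξ_k` exceeds `x`. By independence, the probability of a first exceedance at step `n`
is the mass that the `(n + 1)`-fold product of the law `μ` of `(ξ₀, X₁)` gives to a set of
vectors defined by conditioning on the first pair: a first exceedance of `x` at step `n + 1`
means `ξ₀ ≤ x` followed by a first exceedance of `x - X₁` at step `n` by the shifted walk.
By Fubini this recursion is one application of `T`, and step `0` gives `b`, so the `n`-th
term is `(Tⁿ b)(x)`.
-/

open MeasureTheory ProbabilityTheory

/-- The operator `(Tg)(x) = ∫ g(x - y) P(ξ₀ ≤ x, X₁ ∈ dy)`, realized as an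
integral over the event `{ξ₀ ≤ x}` of `g (x - X₁)`. -/
noncomputable def perturbT {Ω : Type*} [MeasurableSpace Ω] (P : Measure Ω)
    (ξ₀ X₁ : Ω → ℝ) (g : ℝ → ℝ) : ℝ → ℝ :=
  fun x => ∫ ω in {ω | ξ₀ ω ≤ x}, g (x - X₁ ω) ∂P

/-- With `f i = (ξ_i, X_{i+1})` this is `S_k + ξ_k`. -/
def perturbedWalk (f : ℕ → ℝ × ℝ) (k : ℕ) : ℝ :=
  ∑ i ∈ Finset.range k, (f i).2 + (f k).1

lemma perturbedWalk_zero (f : ℕ → ℝ × ℝ) : perturbedWalk f 0 = (f 0).1 := by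
  simp [perturbedWalk]

lemma perturbedWalk_succ (f : ℕ → ℝ × ℝ) (k : ℕ) :
    perturbedWalk f (k + 1) = (f 0).2 + perturbedWalk (fun i => f (i + 1)) k := by
  simp only [perturbedWalk, Finset.sum_range_succ']
  ring

/-- The vectors `(ξ_j, X_{j+1})_{j ≤ n}` whose perturbed walk first exceeds `x` at step `n`
(`mem_firstExceedanceSet_iff`), described recursively by conditioning on the first pair. -/
def firstExceedanceSet : (n : ℕ) → ℝ → Set (Fin (n + 1) → ℝ × ℝ)
  | 0, x => {f | x < (f 0).1}
  | n + 1, x => {f | (f 0).1 ≤ x ∧ Fin.tail f ∈ firstExceedanceSet n (x - (f 0).2)}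

lemma mem_firstExceedanceSet_iff (n : ℕ) (x : ℝ) (f : ℕ → ℝ × ℝ) :
    (fun j : Fin (n + 1) => f j) ∈ firstExceedanceSet n x ↔
      (∀ j < n, perturbedWalk f j ≤ x) ∧ x < perturbedWalk f n := by
  induction n generalizing x f with
  | zero => simp [firstExceedanceSet, perturbedWalk_zero]
  | succ n ih =>
    refine (and_congr_right' (ih (x - (f 0).2) fun i => f (i + 1))).trans ?_
    simp only [Nat.forall_lt_succ_left, perturbedWalk_zero, perturbedWalk_succ,
      sub_lt_iff_lt_add', le_sub_iff_add_le']
    tauto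

lemma measurableSet_firstExceedanceSet_graph (n : ℕ) :
    MeasurableSet {q : ℝ × (Fin (n + 1) → ℝ × ℝ) | q.2 ∈ firstExceedanceSet n q.1} := by
  induction n with
  | zero => exact measurableSet_lt measurable_fst (by fun_prop)
  | succ n ih =>
    have hshift : Measurable fun q : ℝ × (Fin (n + 2) → ℝ × ℝ) =>
        (q.1 - (q.2 0).2, Fin.tail q.2) := by
      refine (measurable_fst.sub (by fun_prop)).prodMk ?_
      exact measurable_pi_lambda _ fun j => (measurable_pi_apply j.succ).comp measurable_snd
    exact (measurableSet_le (by fun_prop) measurable_fst).inter (ih.preimage hshift)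

lemma measurableSet_firstExceedanceSet (n : ℕ) (x : ℝ) :
    MeasurableSet (firstExceedanceSet n x) :=
  (measurableSet_firstExceedanceSet_graph n).preimage measurable_prodMk_left

section

variable {μ : Measure (ℝ × ℝ)}

lemma pi_firstExceedanceSet_zero (x : ℝ) :
    Measure.pi (fun _ : Fin 1 => μ) (firstExceedanceSet 0 x) = μ {p | x < p.1} :=
  (measurePreserving_funUnique μ (Fin 1)).measure_preimage
    (measurableSet_lt measurable_const measurable_fst).nullMeasurableSet

variable [SigmaFinite μ]

lemma measurable_pi_firstExceedanceSet (n : ℕ) :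
    Measurable fun x => Measure.pi (fun _ : Fin (n + 1) => μ) (firstExceedanceSet n x) :=
  measurable_measure_prodMk_left (measurableSet_firstExceedanceSet_graph n)

lemma pi_firstExceedanceSet_succ (n : ℕ) (x : ℝ) :
    Measure.pi (fun _ : Fin (n + 2) => μ) (firstExceedanceSet (n + 1) x)
      = ∫⁻ p in {p : ℝ × ℝ | p.1 ≤ x},
          Measure.pi (fun _ : Fin (n + 1) => μ) (firstExceedanceSet n (x - p.2)) ∂μ := by
  set C : Set ((ℝ × ℝ) × (Fin (n + 1) → ℝ × ℝ)) :=
    {q | q.1.1 ≤ x ∧ q.2 ∈ firstExceedanceSet n (x - q.1.2)}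
  have hC : MeasurableSet C :=
    (measurableSet_le (measurable_fst.comp measurable_fst) measurable_const).inter
      ((measurableSet_firstExceedanceSet_graph n).preimage
        (f := fun q : (ℝ × ℝ) × (Fin (n + 1) → ℝ × ℝ) => (x - q.1.2, q.2)) (by fun_prop))
  have hsplit : firstExceedanceSet (n + 1) x
      = MeasurableEquiv.piFinSuccAbove (fun _ : Fin (n + 2) => ℝ × ℝ) 0 ⁻¹' C := by
    ext f
    simp [C, firstExceedanceSet]
  rw [hsplit, (measurePreserving_piFinSuccAbove (fun _ => μ) 0).measure_preimage
    hC.nullMeasurableSet, Measure.prod_apply hC,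
    ← lintegral_indicator (measurableSet_le measurable_fst measurable_const)]
  refine lintegral_congr fun p => ?_
  by_cases hp : p.1 ≤ x <;> simp [C, hp]

end

section

variable {Ω : Type*} [MeasurableSpace Ω] {P : Measure Ω} {ξ₀ X₁ : Ω → ℝ}

lemma perturbT_apply_eq_setIntegral_map (hξ : Measurable ξ₀) (hX : Measurable X₁)
    {g : ℝ → ℝ} (hg : Measurable g) (x : ℝ) :
    perturbT P ξ₀ X₁ g x
      = ∫ p in {p : ℝ × ℝ | p.1 ≤ x}, g (x - p.2) ∂P.map fun ω => (ξ₀ ω, X₁ ω) := by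
  rw [setIntegral_map (measurableSet_le measurable_fst measurable_const)
    (by fun_prop : Measurable fun p : ℝ × ℝ => g (x - p.2)).aestronglyMeasurable
    (hξ.prodMk hX).aemeasurable]
  rfl

theorem perturbT_iterate_eq_pi_firstExceedanceSet [IsFiniteMeasure P]
    (hξ : Measurable ξ₀) (hX : Measurable X₁) (n : ℕ) :
    (perturbT P ξ₀ X₁)^[n] (fun y => (P {ω | ξ₀ ω > y}).toReal)
      = fun y => (Measure.pi (fun _ : Fin (n + 1) => P.map fun ω => (ξ₀ ω, X₁ ω))
          (firstExceedanceSet n y)).toReal := by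
  set μ := P.map fun ω => (ξ₀ ω, X₁ ω)
  induction n with
  | zero =>
    funext y
    rw [Function.iterate_zero_apply, pi_firstExceedanceSet_zero,
      Measure.map_apply (hξ.prodMk hX) (measurableSet_lt measurable_const measurable_fst)]
    rfl
  | succ n ih =>
    funext y
    have hpi : Measurable fun p : ℝ × ℝ =>
        Measure.pi (fun _ : Fin (n + 1) => μ) (firstExceedanceSet n (y - p.2)) :=
      (measurable_pi_firstExceedanceSet n).comp (measurable_const.sub measurable_snd)
    rw [Function.iterate_succ_apply', ih,
      perturbT_apply_eq_setIntegral_map hξ hX (measurable_pi_firstExceedanceSet n).ennreal_toReal,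
      pi_firstExceedanceSet_succ, integral_toReal hpi.aemeasurable
        (Filter.Eventually.of_forall fun _ => measure_lt_top _ _)]

end

lemma ProbabilityTheory.iIndepFun.map_fin_eq_pi_of_identDistrib {Ω β : Type*}
    [MeasurableSpace Ω] [MeasurableSpace β] {P : Measure Ω} {Z : ℕ → Ω → β} {Y : Ω → β}
    (hind : iIndepFun Z P) (hident : ∀ j, IdentDistrib (Z j) Y P P) (n : ℕ) :
    P.map (fun ω (j : Fin n) => Z j ω) = Measure.pi fun _ => P.map Y := by
  rw [iIndepFun.map_fun_eq_pi_map (f := fun j : Fin n => Z j)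
    (fun j => (hident j).aemeasurable_fst) (hind.precomp Fin.val_injective)]
  simp_rw [(hident _).map_eq]

lemma measure_exists_lt_perturbedWalk {Ω : Type*} [MeasurableSpace Ω] (P : Measure Ω)
    {Z : ℕ → Ω → ℝ × ℝ} (hZ : ∀ j, Measurable (Z j)) (x : ℝ) :
    P {ω | ∃ k, x < perturbedWalk (fun i => Z i ω) k}
      = ∑' n, P ((fun ω (j : Fin (n + 1)) => Z j ω) ⁻¹' firstExceedanceSet n x) := by
  set s : ℕ → Set Ω := fun k => {ω | x < perturbedWalk (fun i => Z i ω) k}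
  have hs : ∀ k, MeasurableSet (s k) := fun k =>
    measurableSet_lt measurable_const
      ((Finset.measurable_sum _ fun i _ => (hZ i).snd).add (hZ k).fst)
  have hfirst : ∀ n, disjointed s n
      = (fun ω (j : Fin (n + 1)) => Z j ω) ⁻¹' firstExceedanceSet n x := by
    intro n
    ext ω
    simp only [disjointed_eq_inter_compl, Set.mem_inter_iff, Set.mem_iInter, Set.mem_compl_iff,
      Set.mem_ofPred_eq, not_lt, Set.mem_preimage, s]
    exact and_comm.trans (mem_firstExceedanceSet_iff n x fun i => Z i ω).symm
  calc P {ω | ∃ k, x < perturbedWalk (fun i => Z i ω) k}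
      = P (⋃ n, disjointed s n) := by rw [iUnion_disjointed, Set.ofPred_exists]
    _ = ∑' n, P (disjointed s n) :=
      measure_iUnion (disjoint_disjointed s) (MeasurableSet.disjointed hs)
    _ = _ := by simp_rw [hfirst]

/-- Neumann-series representation for the tail of the maximum of a perturbed
random walk with i.i.d. pairs `(ξ_j, X_{j+1})`:
`P(M_∞ > x) = ∑_{n=0}^∞ (Tⁿ b)(x)` with `b(x) = P(ξ₀ > x)` and `T⁰ = id`. -/
theorem tail_perturbed_random_walk_neumann_series
    {Ω : Type*} [MeasurableSpace Ω] (P : Measure Ω) [IsProbabilityMeasure P]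
    (X : ℕ → Ω → ℝ) (ξ : ℕ → Ω → ℝ)
    (hXmeas : ∀ i, Measurable (X i)) (hξmeas : ∀ j, Measurable (ξ j))
    (hpairindep : iIndepFun
      (fun j ω => (ξ j ω, X (j + 1) ω)) P)
    (hpairident : ∀ j, IdentDistrib (fun ω => (ξ j ω, X (j + 1) ω))
      (fun ω => (ξ 0 ω, X 1 ω)) P P) :
    ∀ x : ℝ,
      (P {ω | ∃ k : ℕ,
          (∑ i ∈ Finset.range k, X (i + 1) ω) + ξ k ω > x}).toReal
        = ∑' n : ℕ,
            ((perturbT P (ξ 0) (X 1))^[n]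
              (fun y => (P {ω | ξ 0 ω > y}).toReal)) x := by
  intro x
  set Z : ℕ → Ω → ℝ × ℝ := fun j ω => (ξ j ω, X (j + 1) ω)
  have hZ : ∀ j, Measurable (Z j) := fun j => (hξmeas j).prodMk (hXmeas (j + 1))
  change (P {ω | ∃ k, x < perturbedWalk (fun i => Z i ω) k}).toReal = _
  rw [measure_exists_lt_perturbedWalk P hZ x,
    ENNReal.tsum_toReal_eq fun _ => measure_ne_top _ _]
  refine tsum_congr fun n => ?_
  rw [perturbT_iterate_eq_pi_firstExceedanceSet (hξmeas 0) (hXmeas 1)]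
  beta_reduce
  rw [← hpairindep.map_fin_eq_pi_of_identDistrib hpairident,
    Measure.map_apply (measurable_pi_lambda (fun ω (j : Fin (n + 1)) => Z j ω) fun j => hZ j)
      (measurableSet_firstExceedanceSet n x)]
end

section
/- Suppose (ξ_j) is stationary, independent of the random walk (S_n), with E[exp(θ* ξ_0)] < ∞, and suppose the Cramér–Lundberg asymptotic P(max_{n≥0} S_n > x) ~ r e^{-θ* x} holds as x → ∞ with r, θ* > 0. Then liminf_{x→∞} e^{θ* x} P(M_∞ > x) ≥ r · E[exp(θ* ξ_0)], where M_∞ = sup_{k≥0}(S_k + ξ_k). -/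
/-!
Write `S_n = X_0 + ⋯ + X_{n-1}` and `M = sup_n S_n`. The tail bound `P(M > v) ≤ C e^{-θ v}` keeps
`E[e^{t S_k}] = mgf(t)^k` bounded, so `mgf(t) ≤ 1` for `0 ≤ t < θ`, strictly unless `X = 0` a.s.
(excluded by `r > 0`). Hence `S_n → -∞` and the maximum of the walk is attained a.s.; splitting
according to the first time it is attained and using the independence of `ξ` from the walk gives
`P(M_∞ > x) ≥ ∫ P(M > x - s) dP_{ξ₀}(s)`, and Fatou's lemma with `e^{θ y} P(M > y) → r` bounds
the liminf below by `r E[e^{θ ξ₀}]`.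

A real `liminf` is junk unless the function is bounded, so we also need
`P(M_∞ > x) = O(e^{-θ x})`: splitting at the first passage over `v` gives the renewal bound
`∑_k P(S_k > v) ≤ D e^{-θ v}`, and a union bound over `k` yields
`P(M_∞ > x) ≤ D E[e^{θ ξ₀}] e^{-θ x}`.
-/

open MeasureTheory ProbabilityTheory Filter Finset Real
open scoped ENNReal Topology

theorem exists_le_ofReal_mul_exp_neg_of_tendsto {F : ℝ → ℝ≥0∞} {θ r : ℝ} (hθ : 0 ≤ θ)
    (hF : ∀ x, F x ≤ 1) (hlim : Tendsto (fun x => exp (θ * x) * (F x).toReal) atTop (𝓝 r)) :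
    ∃ C, 0 ≤ C ∧ ∀ x, F x ≤ ENNReal.ofReal (C * exp (-θ * x)) := by
  obtain ⟨x₀, hx₀⟩ := eventually_atTop.mp (hlim.eventually (eventually_le_nhds (lt_add_one r)))
  set C := max (r + 1) (exp (θ * x₀))
  refine ⟨C, (exp_pos _).le.trans (le_max_right _ _), fun x => ?_⟩
  rw [← ENNReal.ofReal_toReal (ne_top_of_le_ne_top ENNReal.one_ne_top (hF x))]
  refine ENNReal.ofReal_le_ofReal ?_
  rcases le_total x₀ x with hx | hx
  · calc (F x).toReal = exp (θ * x) * (F x).toReal * exp (-θ * x) := by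
          rw [mul_comm (exp _), mul_assoc, ← exp_add]; simp
      _ ≤ C * exp (-θ * x) := by gcongr; exact (hx₀ x hx).trans (le_max_left _ _)
  · calc (F x).toReal ≤ 1 := ENNReal.toReal_le_of_le_ofReal zero_le_one (by simpa using hF x)
      _ ≤ exp (θ * x₀) * exp (-θ * x) := by rw [← exp_add]; exact one_le_exp (by nlinarith)
      _ ≤ C * exp (-θ * x) := by gcongr; exact le_max_right _ _

theorem setLIntegral_ofReal_exp_le_tsum {Ω : Type*} [MeasurableSpace Ω] (μ : Measure Ω)
    {f : Ω → ℝ} {A : Set Ω} (hf : Measurable f) (hA : MeasurableSet A) (hfA : ∀ ω ∈ A, 0 ≤ f ω)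
    {t : ℝ} (ht : 0 ≤ t) :
    ∫⁻ ω in A, ENNReal.ofReal (exp (t * f ω)) ∂μ ≤
      ∑' j : ℕ, ENNReal.ofReal (exp (t * (j + 1))) * μ ({ω | (j : ℝ) ≤ f ω} ∩ A) := by
  have hmeas (j : ℕ) : MeasurableSet {ω | (j : ℝ) ≤ f ω} := measurableSet_le measurable_const hf
  calc ∫⁻ ω in A, ENNReal.ofReal (exp (t * f ω)) ∂μ
      ≤ ∫⁻ ω in A, ∑' j : ℕ,
          {ω | (j : ℝ) ≤ f ω}.indicator (fun _ => ENNReal.ofReal (exp (t * (j + 1)))) ω ∂μ := by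
        refine setLIntegral_mono' hA fun ω hω => le_trans ?_ (ENNReal.le_tsum ⌊f ω⌋₊)
        rw [Set.indicator_of_mem (show ω ∈ {ω' | (⌊f ω⌋₊ : ℝ) ≤ f ω'} from
          Nat.floor_le (hfA ω hω))]
        gcongr
        exact (Nat.lt_floor_add_one _).le
    _ = _ := by
        rw [lintegral_tsum fun j => (measurable_const.indicator (hmeas j)).aemeasurable]
        simp only [lintegral_indicator_const (hmeas _), Measure.restrict_apply (hmeas _)]

theorem tsum_ofReal_exp_mul_le {a : ℕ → ℝ≥0∞} {t θ c : ℝ} (hc : 0 ≤ c)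
    (ha : ∀ j : ℕ, a j ≤ ENNReal.ofReal (c * exp (-θ * j))) :
    ∑' j : ℕ, ENNReal.ofReal (exp (t * (j + 1))) * a j ≤
      ENNReal.ofReal (c * exp t) * (1 - ENNReal.ofReal (exp (t - θ)))⁻¹ := by
  have hterm (j : ℕ) : ENNReal.ofReal (exp (t * (j + 1))) * ENNReal.ofReal (c * exp (-θ * j)) =
      ENNReal.ofReal (c * exp t) * ENNReal.ofReal (exp (t - θ)) ^ j := by
    rw [← ENNReal.ofReal_pow (exp_pos _).le, ← exp_nat_mul, ← ENNReal.ofReal_mul (exp_pos _).le,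
      ← ENNReal.ofReal_mul (by positivity)]
    congr 1
    rw [mul_left_comm, ← exp_add, mul_assoc, ← exp_add]
    ring_nf
  calc ∑' j : ℕ, ENNReal.ofReal (exp (t * (j + 1))) * a j
      ≤ ∑' j : ℕ, ENNReal.ofReal (c * exp t) * ENNReal.ofReal (exp (t - θ)) ^ j :=
        ENNReal.tsum_le_tsum fun j => (hterm j).symm ▸ mul_le_mul_right (ha j) _
    _ = _ := by rw [ENNReal.tsum_mul_left, ENNReal.tsum_geometric]

theorem ae_eq_zero_of_mgf_eq_one {Ω : Type*} [MeasurableSpace Ω] {μ : Measure Ω}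
    [IsProbabilityMeasure μ] {Y : Ω → ℝ} {t : ℝ} (ht : t ≠ 0)
    (hint : Integrable (fun ω => exp (2 * t * Y ω)) μ) (h1 : mgf Y μ t = 1)
    (h2 : mgf Y μ (2 * t) ≤ 1) : ∀ᵐ ω ∂μ, Y ω = 0 := by
  have hint1 : Integrable (fun ω => exp (t * Y ω)) μ :=
    Integrable.of_integral_ne_zero (by rw [← mgf, h1]; exact one_ne_zero)
  have hsq (ω : Ω) : (exp (t * Y ω) - 1) ^ 2 = exp (2 * t * Y ω) - 2 * exp (t * Y ω) + 1 := by
    rw [sub_sq, ← exp_nat_mul]; ring_nf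
  have hint2 : Integrable (fun ω => exp (2 * t * Y ω) - 2 * exp (t * Y ω)) μ :=
    hint.sub (hint1.const_mul 2)
  -- `E[(e^{tY} - 1)^2] = mgf(2t) - 2 mgf(t) + 1 ≤ 0`
  have hzero : ∫ ω, (exp (t * Y ω) - 1) ^ 2 ∂μ = 0 := by
    refine le_antisymm ?_ (integral_nonneg fun ω => sq_nonneg _)
    simp_rw [hsq]
    rw [integral_add hint2 (integrable_const 1), integral_sub hint (hint1.const_mul 2),
      integral_const_mul]
    simp only [mgf] at h1 h2
    simp only [h1, mul_one, integral_const, probReal_univ, smul_eq_mul]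
    linarith
  have hint_sq : Integrable (fun ω => (exp (t * Y ω) - 1) ^ 2) μ := by
    simp_rw [hsq]; exact hint2.add (integrable_const 1)
  filter_upwards [(integral_eq_zero_iff_of_nonneg (fun ω => sq_nonneg _) hint_sq).mp hzero]
    with ω hω
  have : exp (t * Y ω) = 1 := by simpa [sub_eq_zero] using hω
  simpa [ht] using this

theorem ProbabilityTheory.IndepFun.measure_mem_eq_lintegral {Ω α β : Type*} [MeasurableSpace Ω]
    [MeasurableSpace α] [MeasurableSpace β] {P : Measure Ω} [IsFiniteMeasure P] {Y : Ω → α}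
    {Z : Ω → β} (hY : Measurable Y) (hZ : Measurable Z) (hYZ : IndepFun Y Z P)
    {E : Set (α × β)} (hE : MeasurableSet E) :
    P {ω | (Y ω, Z ω) ∈ E} = ∫⁻ z, P {ω | (Y ω, z) ∈ E} ∂(P.map Z) := by
  rw [show {ω | (Y ω, Z ω) ∈ E} = (fun ω => (Y ω, Z ω)) ⁻¹' E from rfl,
    ← Measure.map_apply (hY.prodMk hZ) hE,
    (indepFun_iff_map_prod_eq_prod_map_map hY.aemeasurable hZ.aemeasurable).mp hYZ,
    Measure.prod_apply_symm hE]
  refine lintegral_congr fun z => ?_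
  rw [Measure.map_apply hY (measurable_prodMk_right hE)]
  rfl

theorem ENNReal.inv_one_sub_ofReal_ne_top {a : ℝ} (ha : a < 1) : (1 - ENNReal.ofReal a)⁻¹ ≠ ∞ :=
  ENNReal.inv_ne_top.mpr (tsub_pos_of_lt (ENNReal.ofReal_lt_one.mpr ha)).ne'

theorem ENNReal.tsum_mul_tsum_eq_tsum_sum_range (f g : ℕ → ℝ≥0∞) :
    (∑' n, f n) * ∑' n, g n = ∑' n, ∑ k ∈ range (n + 1), f k * g (n - k) :=
  calc (∑' n, f n) * ∑' n, g n = ∑' p : ℕ × ℕ, f p.1 * g p.2 := by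
        rw [ENNReal.tsum_prod (f := fun a b => f a * g b), ← ENNReal.tsum_mul_right]
        simp_rw [ENNReal.tsum_mul_left]
    _ = ∑' x : Σ n, antidiagonal n, f x.2.1.1 * g x.2.1.2 :=
        (HasAntidiagonal.sigmaAntidiagonalEquivProd.tsum_eq (fun p => f p.1 * g p.2)).symm
    _ = _ := by
        rw [ENNReal.tsum_sigma']
        simp_rw [Finset.tsum_subtype (antidiagonal _) (fun p => f p.1 * g p.2),
          Nat.sum_antidiagonal_eq_sum_range_succ (fun k l => f k * g l)]

theorem ofReal_mul_lintegral_le_liminf {μ : Measure ℝ} {F : ℝ → ℝ≥0∞} (hF : Antitone F)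
    (hFtop : ∀ v, F v ≠ ∞) {θ r : ℝ}
    (hlim : Tendsto (fun v => exp (θ * v) * (F v).toReal) atTop (𝓝 r)) :
    ENNReal.ofReal r * ∫⁻ s, ENNReal.ofReal (exp (θ * s)) ∂μ ≤
      liminf (fun x => ENNReal.ofReal (exp (θ * x)) * ∫⁻ s, F (x - s) ∂μ) atTop := by
  have hpt (s : ℝ) : Tendsto (fun x => ENNReal.ofReal (exp (θ * x)) * F (x - s)) atTop
      (𝓝 (ENNReal.ofReal r * ENNReal.ofReal (exp (θ * s)))) := by
    rw [← ENNReal.ofReal_mul' (exp_pos _).le]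
    refine (ENNReal.tendsto_ofReal ((hlim.comp (tendsto_atTop_add_const_right _ (-s)
      tendsto_id)).mul_const (exp (θ * s)))).congr fun x => ?_
    rw [Function.comp_apply, id, ← sub_eq_add_neg, mul_right_comm, ← exp_add,
      ENNReal.ofReal_mul (exp_pos _).le, ENNReal.ofReal_toReal (hFtop _)]
    ring_nf
  calc ENNReal.ofReal r * ∫⁻ s, ENNReal.ofReal (exp (θ * s)) ∂μ
      = ∫⁻ s, liminf (fun x => ENNReal.ofReal (exp (θ * x)) * F (x - s)) atTop ∂μ := by
        rw [← lintegral_const_mul' _ _ ENNReal.ofReal_ne_top]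
        exact lintegral_congr fun s => (hpt s).liminf_eq.symm
    _ ≤ liminf (fun x => ∫⁻ s, ENNReal.ofReal (exp (θ * x)) * F (x - s) ∂μ) atTop :=
        lintegral_liminf_le fun x =>
          (hF.measurable.comp (measurable_const.sub measurable_id)).const_mul _
    _ = _ := by simp_rw [lintegral_const_mul' _ _ ENNReal.ofReal_ne_top]

theorem le_liminf_exp_mul_toReal {G : ℝ → ℝ≥0∞} {θ a : ℝ} {D : ℝ≥0∞} (hD : D ≠ ∞)
    (hG : ∀ x, G x ≤ D * ENNReal.ofReal (exp (-θ * x)))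
    (h : ENNReal.ofReal a ≤ liminf (fun x => ENNReal.ofReal (exp (θ * x)) * G x) atTop) :
    a ≤ liminf (fun x => exp (θ * x) * (G x).toReal) atTop := by
  have hGD (x : ℝ) : ENNReal.ofReal (exp (θ * x)) * G x ≤ D :=
    calc ENNReal.ofReal (exp (θ * x)) * G x
        ≤ ENNReal.ofReal (exp (θ * x)) * (D * ENNReal.ofReal (exp (-θ * x))) := by
          gcongr; exact hG x
      _ = D := by rw [mul_left_comm, ← ENNReal.ofReal_mul (exp_pos _).le, ← exp_add]; simp
  have heq : (fun x => exp (θ * x) * (G x).toReal) =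
      fun x => (ENNReal.ofReal (exp (θ * x)) * G x).toReal := by
    funext x
    rw [ENNReal.toReal_mul, ENNReal.toReal_ofReal (exp_pos _).le]
  rw [heq, ENNReal.liminf_toReal_eq hD (Eventually.of_forall hGD)]
  exact (ENNReal.ofReal_le_iff_le_toReal (ne_top_of_le_ne_top hD
    (liminf_le_of_frequently_le' (Frequently.of_forall hGD)))).mp h

namespace RandomWalk

variable {Ω : Type*} {X : ℕ → Ω → ℝ}

abbrev sigmaOf (X : ℕ → Ω → ℝ) (s : Set ℕ) : MeasurableSpace Ω :=
  ⨆ i ∈ s, MeasurableSpace.comap (X i) inferInstance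

theorem measurable_sum_sigmaOf {s : Set ℕ} {u : Finset ℕ} (hu : ↑u ⊆ s) :
    Measurable[sigmaOf X s] fun ω => ∑ i ∈ u, X i ω :=
  Finset.measurable_sum u fun i hi => (comap_measurable (X i)).mono
    (le_iSup₂ (f := fun i (_ : i ∈ s) => MeasurableSpace.comap (X i) inferInstance) i (hu hi))
    le_rfl

theorem sigmaOf_le [MeasurableSpace Ω] (hX : ∀ i, Measurable (X i)) (s : Set ℕ) :
    sigmaOf X s ≤ ‹MeasurableSpace Ω› :=
  iSup₂_le fun i _ => (hX i).comap_le

def firstPassage (X : ℕ → Ω → ℝ) (v : ℝ) : ℕ → Set Ω :=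
  disjointed fun n => {ω | v < ∑ i ∈ range n, X i ω}

theorem measurableSet_firstPassage (v : ℝ) (n : ℕ) :
    MeasurableSet[sigmaOf X (Set.Iio n)] (firstPassage X v n) := by
  have hlt {m : ℕ} (hm : m ≤ n) : MeasurableSet[sigmaOf X (Set.Iio n)]
      {ω | v < ∑ i ∈ range m, X i ω} :=
    measurableSet_lt measurable_const (measurable_sum_sigmaOf fun i hi =>
      Set.mem_Iio.mpr ((mem_range.mp hi).trans_le hm))
  rw [firstPassage, disjointed_eq_inter_compl]
  exact (hlt le_rfl).inter
    (MeasurableSet.iInter fun m => MeasurableSet.iInter fun hm => (hlt hm.le).compl)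

theorem pairwise_disjoint_firstPassage (v : ℝ) :
    Pairwise (Function.onFun Disjoint (firstPassage X v)) :=
  disjoint_disjointed _

theorem firstPassage_subset (v : ℝ) (n : ℕ) :
    firstPassage X v n ⊆ {ω | v < ∑ i ∈ range n, X i ω} :=
  disjointed_subset _ n

theorem subset_biUnion_firstPassage (v : ℝ) (k : ℕ) :
    {ω | v < ∑ i ∈ range k, X i ω} ⊆ ⋃ n ∈ range (k + 1), firstPassage X v n := by
  have h := le_partialSups (fun n => {ω | v < ∑ i ∈ range n, X i ω}) k
  rwa [← partialSups_disjointed, partialSups_eq_biUnion_range] at h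

variable [MeasurableSpace Ω] {P : Measure Ω}

theorem measure_exists_le_sum_range_le {θ C : ℝ}
    (htail : ∀ v, P {ω | ∃ n, v < ∑ i ∈ range n, X i ω} ≤ ENNReal.ofReal (C * exp (-θ * v)))
    (u : ℝ) :
    P {ω | ∃ n, u ≤ ∑ i ∈ range n, X i ω} ≤ ENNReal.ofReal (C * exp θ * exp (-θ * u)) := by
  refine (measure_mono (Set.ofPred_subset_ofPred.mpr fun ω ⟨n, hn⟩ => ⟨n, by linarith⟩)).trans
    ((htail (u - 1)).trans_eq ?_)
  rw [mul_assoc, ← exp_add]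
  ring_nf

theorem lintegral_exp_sum_range_le [IsProbabilityMeasure P] (hX : ∀ i, Measurable (X i))
    {θ C t : ℝ} (hC : 0 ≤ C) (ht : 0 ≤ t)
    (htail : ∀ v, P {ω | ∃ n, v < ∑ i ∈ range n, X i ω} ≤ ENNReal.ofReal (C * exp (-θ * v)))
    (k : ℕ) :
    ∫⁻ ω, ENNReal.ofReal (exp (t * ∑ i ∈ range k, X i ω)) ∂P ≤
      1 + ENNReal.ofReal (C * exp θ * exp t) * (1 - ENNReal.ofReal (exp (t - θ)))⁻¹ := by
  have hS : Measurable fun ω => ∑ i ∈ range k, X i ω := Finset.measurable_sum _ fun i _ => hX i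
  have hA : MeasurableSet {ω | 0 ≤ ∑ i ∈ range k, X i ω} := measurableSet_le measurable_const hS
  rw [← lintegral_add_compl _ hA, add_comm]
  gcongr
  · calc ∫⁻ ω in {ω | 0 ≤ ∑ i ∈ range k, X i ω}ᶜ,
          ENNReal.ofReal (exp (t * ∑ i ∈ range k, X i ω)) ∂P
        ≤ ∫⁻ _ in {ω | 0 ≤ ∑ i ∈ range k, X i ω}ᶜ, 1 ∂P := by
          refine setLIntegral_mono measurable_const fun ω hω => ?_
          rw [ENNReal.ofReal_le_one, exp_le_one_iff]
          exact mul_nonpos_of_nonneg_of_nonpos ht (not_le.mp (Set.notMem_ofPred_iff.mp hω)).le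
      _ ≤ 1 := by simpa using prob_le_one
  · refine (setLIntegral_ofReal_exp_le_tsum P hS hA (fun ω hω => hω) ht).trans
      (tsum_ofReal_exp_mul_le (by positivity) fun j => ?_)
    exact (measure_mono (t := {ω | ∃ n, (j : ℝ) ≤ ∑ i ∈ range n, X i ω})
      fun ω hω => ⟨k, hω.1⟩).trans (measure_exists_le_sum_range_le htail j)

theorem integrable_exp_mul [IsProbabilityMeasure P] (hX : ∀ i, Measurable (X i))
    {θ C t : ℝ} (hC : 0 ≤ C) (ht : 0 ≤ t) (htθ : t < θ)
    (htail : ∀ v, P {ω | ∃ n, v < ∑ i ∈ range n, X i ω} ≤ ENNReal.ofReal (C * exp (-θ * v))) :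
    Integrable (fun ω => exp (t * X 0 ω)) P := by
  refine ⟨((hX 0).const_mul t).exp.aestronglyMeasurable, ?_⟩
  rw [hasFiniteIntegral_iff_ofReal (ae_of_all _ fun ω => (exp_pos _).le)]
  have hK := lintegral_exp_sum_range_le hX hC ht htail 1
  simp only [range_one, sum_singleton] at hK
  refine hK.trans_lt (ENNReal.add_lt_top.mpr ⟨ENNReal.one_lt_top, ENNReal.mul_lt_top
    ENNReal.ofReal_lt_top (ENNReal.inv_one_sub_ofReal_ne_top (exp_lt_one_iff.mpr ?_)).lt_top⟩)
  linarith

theorem lintegral_exp_sum_eq_pow [IsProbabilityMeasure P] (hX : ∀ i, Measurable (X i))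
    (hindep : iIndepFun X P) (hident : ∀ i, IdentDistrib (X i) (X 0) P P) {t : ℝ}
    (hint : Integrable (fun ω => exp (t * X 0 ω)) P) (s : Finset ℕ) :
    ∫⁻ ω, ENNReal.ofReal (exp (t * ∑ i ∈ s, X i ω)) ∂P = ENNReal.ofReal (mgf (X 0) P t) ^ #s := by
  have hmgf (i : ℕ) : mgf (X i) P t = mgf (X 0) P t :=
    ((hident i).comp (measurable_const_mul t).exp).integral_eq
  have hint_s := hindep.integrable_exp_mul_sum hX (s := s) fun i _ =>
    ((hident i).comp (measurable_const_mul t).exp).integrable_iff.mpr hint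
  simp only [Finset.sum_apply] at hint_s
  rw [← ofReal_integral_eq_lintegral_ofReal hint_s (ae_of_all _ fun ω => (exp_pos _).le),
    ← ENNReal.ofReal_pow (mgf_nonneg), ← prod_const, ← prod_congr rfl fun i _ => hmgf i,
    ← hindep.mgf_sum hX]
  simp only [mgf, Finset.sum_apply]

theorem mgf_le_one [IsProbabilityMeasure P] (hX : ∀ i, Measurable (X i))
    (hindep : iIndepFun X P) (hident : ∀ i, IdentDistrib (X i) (X 0) P P)
    {θ C t : ℝ} (hC : 0 ≤ C) (ht : 0 ≤ t) (htθ : t < θ)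
    (htail : ∀ v, P {ω | ∃ n, v < ∑ i ∈ range n, X i ω} ≤ ENNReal.ofReal (C * exp (-θ * v))) :
    mgf (X 0) P t ≤ 1 := by
  set K := 1 + ENNReal.ofReal (C * exp θ * exp t) * (1 - ENNReal.ofReal (exp (t - θ)))⁻¹
  have hK : K ≠ ∞ := ENNReal.add_ne_top.mpr ⟨ENNReal.one_ne_top, ENNReal.mul_ne_top
    ENNReal.ofReal_ne_top (ENNReal.inv_one_sub_ofReal_ne_top (exp_lt_one_iff.mpr (by linarith)))⟩
  have hpow (k : ℕ) : mgf (X 0) P t ^ k ≤ K.toReal := by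
    have h := (lintegral_exp_sum_eq_pow hX hindep hident
      (integrable_exp_mul hX hC ht htθ htail) (range k)).symm.trans_le
      (lintegral_exp_sum_range_le hX hC ht htail k)
    rw [card_range, ← ENNReal.ofReal_pow mgf_nonneg] at h
    exact (ENNReal.ofReal_le_iff_le_toReal hK).mp h
  by_contra! h
  obtain ⟨k, hk⟩ := pow_unbounded_of_one_lt K.toReal h
  exact (hpow k).not_gt hk

theorem mgf_lt_one [IsProbabilityMeasure P] (hX : ∀ i, Measurable (X i))
    (hindep : iIndepFun X P) (hident : ∀ i, IdentDistrib (X i) (X 0) P P)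
    {θ C t : ℝ} (hC : 0 ≤ C) (ht : 0 < t) (htθ : 2 * t < θ)
    (htail : ∀ v, P {ω | ∃ n, v < ∑ i ∈ range n, X i ω} ≤ ENNReal.ofReal (C * exp (-θ * v)))
    (hX0 : ¬ ∀ᵐ ω ∂P, X 0 ω = 0) :
    mgf (X 0) P t < 1 :=
  (mgf_le_one hX hindep hident hC ht.le (by linarith) htail).lt_of_ne fun h =>
    hX0 (ae_eq_zero_of_mgf_eq_one ht.ne' (integrable_exp_mul hX hC (by positivity) htθ htail) h
      (mgf_le_one hX hindep hident hC (by positivity) htθ htail))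

theorem not_ae_eq_zero_of_tendsto (hident : ∀ i, IdentDistrib (X i) (X 0) P P) {θ r : ℝ}
    (hr : r ≠ 0) (hlim : Tendsto (fun x => exp (θ * x) *
      (P {ω | ∃ n, x < ∑ i ∈ range n, X i ω}).toReal) atTop (𝓝 r)) :
    ¬ ∀ᵐ ω ∂P, X 0 ω = 0 := by
  intro h0
  have hall : ∀ᵐ ω ∂P, ∀ i, X i ω = 0 := ae_all_iff.mpr fun i =>
    (hident i).symm.ae_snd (p := fun x => x = 0) (measurableSet_singleton 0) h0
  have hnull : ∀ᶠ x in atTop,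
      exp (θ * x) * (P {ω | ∃ n, x < ∑ i ∈ range n, X i ω}).toReal = 0 := by
    filter_upwards [eventually_ge_atTop 0] with x hx
    have : P {ω | ∃ n, x < ∑ i ∈ range n, X i ω} = 0 := by
      refine measure_mono_null (t := {ω | ¬ ∀ i, X i ω = 0}) (fun ω hω h => ?_)
        (ae_iff.mp hall)
      obtain ⟨n, hn⟩ := hω
      simp only [h, sum_const_zero] at hn
      linarith
    simp [this]
  exact hr (tendsto_nhds_unique (hlim.congr' hnull) tendsto_const_nhds)

theorem ae_tendsto_sum_range_atBot [IsProbabilityMeasure P] (hX : ∀ i, Measurable (X i))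
    (hindep : iIndepFun X P) (hident : ∀ i, IdentDistrib (X i) (X 0) P P) {t : ℝ} (ht : 0 < t)
    (hint : Integrable (fun ω => exp (t * X 0 ω)) P) (hρ : mgf (X 0) P t < 1) :
    ∀ᵐ ω ∂P, Tendsto (fun n => ∑ i ∈ range n, X i ω) atTop atBot := by
  have hmeas (n : ℕ) : Measurable fun ω => ENNReal.ofReal (exp (t * ∑ i ∈ range n, X i ω)) :=
    ((Finset.measurable_sum _ fun i _ => hX i).const_mul t).exp.ennreal_ofReal
  have hfin : ∫⁻ ω, ∑' n, ENNReal.ofReal (exp (t * ∑ i ∈ range n, X i ω)) ∂P ≠ ∞ := by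
    rw [lintegral_tsum fun n => (hmeas n).aemeasurable]
    simp only [lintegral_exp_sum_eq_pow hX hindep hident hint, card_range, ENNReal.tsum_geometric]
    exact ENNReal.inv_one_sub_ofReal_ne_top hρ
  filter_upwards [ae_lt_top (Measurable.tsum hmeas) hfin] with ω hω
  have h0 := (ENNReal.tendsto_toReal ENNReal.zero_ne_top).comp
    (ENNReal.tendsto_atTop_zero_of_tsum_ne_top hω.ne)
  simp only [Function.comp_def, ENNReal.toReal_ofReal (exp_pos _).le, ENNReal.toReal_zero] at h0
  exact (tendsto_const_mul_atBot_of_pos ht).mp (tendsto_exp_comp_nhds_zero.mp h0)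

theorem ae_exists_forall_sum_range_le [IsProbabilityMeasure P] (hX : ∀ i, Measurable (X i))
    (hindep : iIndepFun X P) (hident : ∀ i, IdentDistrib (X i) (X 0) P P) {t : ℝ} (ht : 0 < t)
    (hint : Integrable (fun ω => exp (t * X 0 ω)) P) (hρ : mgf (X 0) P t < 1) :
    ∀ᵐ ω ∂P, ∃ n, ∀ m, ∑ i ∈ range m, X i ω ≤ ∑ i ∈ range n, X i ω := by
  filter_upwards [ae_tendsto_sum_range_atBot hX hindep hident ht hint hρ] with ω hω
  exact (Nat.cofinite_eq_atTop ▸ hω).exists_forall_ge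

theorem lintegral_mul_exp_sum_Ico [IsProbabilityMeasure P] (hX : ∀ i, Measurable (X i))
    (hindep : iIndepFun X P) (hident : ∀ i, IdentDistrib (X i) (X 0) P P) {t : ℝ}
    (hint : Integrable (fun ω => exp (t * X 0 ω)) P) {n k : ℕ} {F : Ω → ℝ≥0∞}
    (hF : Measurable[sigmaOf X (Set.Iio n)] F) :
    ∫⁻ ω, F ω * ENNReal.ofReal (exp (t * ∑ i ∈ Ico n k, X i ω)) ∂P =
      (∫⁻ ω, F ω ∂P) * ENNReal.ofReal (mgf (X 0) P t) ^ (k - n) := by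
  rw [lintegral_mul_eq_lintegral_mul_lintegral_of_independent_measurableSpace
      (sigmaOf_le hX _) (sigmaOf_le hX _)
      (indep_iSup_of_disjoint (fun i => (hX i).comap_le) ((iIndepFun_iff_iIndep _ _ _).mp hindep)
        (Set.Iio_disjoint_Ici le_rfl)) hF
      (((measurable_sum_sigmaOf (s := Set.Ici n) fun i hi => (mem_Ico.mp hi).1).const_mul
        t).exp.ennreal_ofReal),
    lintegral_exp_sum_eq_pow hX hindep hident hint, Nat.card_Ico]

theorem measure_firstPassage_inter_le [IsProbabilityMeasure P] (hX : ∀ i, Measurable (X i))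
    (hindep : iIndepFun X P) (hident : ∀ i, IdentDistrib (X i) (X 0) P P) {t : ℝ} (ht : 0 ≤ t)
    (hint : Integrable (fun ω => exp (t * X 0 ω)) P) (v : ℝ) {n k : ℕ} (hnk : n ≤ k) :
    P (firstPassage X v n ∩ {ω | v < ∑ i ∈ range k, X i ω}) ≤
      (∫⁻ ω in firstPassage X v n, ENNReal.ofReal (exp (t * (∑ i ∈ range n, X i ω - v))) ∂P) *
        ENNReal.ofReal (mgf (X 0) P t) ^ (k - n) := by
  have hA := measurableSet_firstPassage (X := X) v n
  have hA' : MeasurableSet (firstPassage X v n) := sigmaOf_le hX _ _ hA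
  have hF : Measurable[sigmaOf X (Set.Iio n)] ((firstPassage X v n).indicator
      fun ω => ENNReal.ofReal (exp (t * (∑ i ∈ range n, X i ω - v)))) :=
    (((measurable_sum_sigmaOf fun i hi => mem_range.mp hi).sub_const v).const_mul
      t).exp.ennreal_ofReal.indicator hA
  rw [← lintegral_indicator hA', ← lintegral_mul_exp_sum_Ico hX hindep hident hint hF,
    ← lintegral_indicator_one (hA'.inter (measurableSet_lt measurable_const
      (Finset.measurable_sum _ fun i _ => hX i)))]
  refine lintegral_mono fun ω => ?_
  by_cases hω : ω ∈ firstPassage X v n ∩ {ω | v < ∑ i ∈ range k, X i ω}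
  · -- `e^{t(Sₙ - v)} e^{t(Sₖ - Sₙ)} = e^{t(Sₖ - v)} ≥ 1`
    rw [Set.indicator_of_mem hω, Pi.one_apply, Set.indicator_of_mem hω.1,
      ← ENNReal.ofReal_mul (exp_pos _).le, ← exp_add, ← mul_add]
    exact ENNReal.one_le_ofReal.mpr (one_le_exp (mul_nonneg ht
      (by linarith [hω.2.out, sum_range_add_sum_Ico (fun i => X i ω) hnk])))
  · simp [Set.indicator_of_notMem hω]

theorem tsum_setLIntegral_firstPassage_le (hX : ∀ i, Measurable (X i)) {θ C t : ℝ} (hC : 0 ≤ C)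
    (ht : 0 ≤ t)
    (htail : ∀ v, P {ω | ∃ n, v < ∑ i ∈ range n, X i ω} ≤ ENNReal.ofReal (C * exp (-θ * v)))
    (v : ℝ) :
    ∑' n, ∫⁻ ω in firstPassage X v n, ENNReal.ofReal (exp (t * (∑ i ∈ range n, X i ω - v))) ∂P ≤
      ENNReal.ofReal (C * exp θ * exp (-θ * v) * exp t) *
        (1 - ENNReal.ofReal (exp (t - θ)))⁻¹ := by
  have hS (n : ℕ) : Measurable fun ω => ∑ i ∈ range n, X i ω - v :=
    (Finset.measurable_sum _ fun i _ => hX i).sub_const v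
  have hA (n : ℕ) : MeasurableSet (firstPassage X v n) :=
    sigmaOf_le hX _ _ (measurableSet_firstPassage v n)
  set B : ℕ → ℕ → Set Ω :=
    fun j n => {ω | (j : ℝ) ≤ ∑ i ∈ range n, X i ω - v} ∩ firstPassage X v n
  calc _ ≤ ∑' n, ∑' j : ℕ, ENNReal.ofReal (exp (t * (j + 1))) * P (B j n) :=
        ENNReal.tsum_le_tsum fun n => setLIntegral_ofReal_exp_le_tsum P (hS n) (hA n)
          (fun ω hω => sub_nonneg.mpr (firstPassage_subset v n hω).le) ht
    _ = ∑' j : ℕ, ENNReal.ofReal (exp (t * (j + 1))) * ∑' n, P (B j n) := by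
        rw [ENNReal.tsum_comm]
        simp_rw [ENNReal.tsum_mul_left]
    _ ≤ _ := tsum_ofReal_exp_mul_le (by positivity) fun j => ?_
  -- the overshoot events `B j n` are disjoint in `n` and all lie in `{sup S ≥ v + j}`
  rw [← measure_iUnion (f := B j) (fun m n hmn => (pairwise_disjoint_firstPassage v hmn).mono
    (fun _ h => h.2) (fun _ h => h.2)) fun n =>
      (measurableSet_le measurable_const (hS n)).inter (hA n)]
  refine (measure_mono fun ω hω => ?_).trans
    ((measure_exists_le_sum_range_le htail (v + j)).trans_eq ?_)
  · obtain ⟨n, hn, -⟩ := Set.mem_iUnion.mp hω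
    exact ⟨n, by linarith [hn.out]⟩
  · rw [mul_assoc (C * exp θ), ← exp_add]
    ring_nf

theorem exists_tsum_measure_lt_sum_range_le [IsProbabilityMeasure P]
    (hX : ∀ i, Measurable (X i)) (hindep : iIndepFun X P)
    (hident : ∀ i, IdentDistrib (X i) (X 0) P P) {θ C t : ℝ} (hC : 0 ≤ C) (ht : 0 ≤ t)
    (htθ : t < θ) (hint : Integrable (fun ω => exp (t * X 0 ω)) P) (hρ : mgf (X 0) P t < 1)
    (htail : ∀ v, P {ω | ∃ n, v < ∑ i ∈ range n, X i ω} ≤ ENNReal.ofReal (C * exp (-θ * v))) :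
    ∃ D ≠ ∞, ∀ v, ∑' k, P {ω | v < ∑ i ∈ range k, X i ω} ≤ D * ENNReal.ofReal (exp (-θ * v)) := by
  set q := ENNReal.ofReal (mgf (X 0) P t)
  refine ⟨ENNReal.ofReal (C * exp θ * exp t) * (1 - ENNReal.ofReal (exp (t - θ)))⁻¹ * (1 - q)⁻¹,
    ENNReal.mul_ne_top (ENNReal.mul_ne_top ENNReal.ofReal_ne_top
      (ENNReal.inv_one_sub_ofReal_ne_top (exp_lt_one_iff.mpr (by linarith))))
      (ENNReal.inv_one_sub_ofReal_ne_top hρ), fun v => ?_⟩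
  set Λ : ℕ → ℝ≥0∞ := fun n =>
    ∫⁻ ω in firstPassage X v n, ENNReal.ofReal (exp (t * (∑ i ∈ range n, X i ω - v))) ∂P
  have hk (k : ℕ) : P {ω | v < ∑ i ∈ range k, X i ω} ≤ ∑ n ∈ range (k + 1), Λ n * q ^ (k - n) :=
    calc P {ω | v < ∑ i ∈ range k, X i ω}
        ≤ P (⋃ n ∈ range (k + 1), firstPassage X v n ∩ {ω | v < ∑ i ∈ range k, X i ω}) := by
          rw [← Set.iUnion₂_inter]
          exact measure_mono (Set.subset_inter (subset_biUnion_firstPassage v k) subset_rfl)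
      _ ≤ ∑ n ∈ range (k + 1), P (firstPassage X v n ∩ {ω | v < ∑ i ∈ range k, X i ω}) :=
          measure_biUnion_finset_le _ _
      _ ≤ _ := sum_le_sum fun n hn => measure_firstPassage_inter_le hX hindep hident ht hint v
          (mem_range_succ_iff.mp hn)
  calc ∑' k, P {ω | v < ∑ i ∈ range k, X i ω}
      ≤ ∑' k, ∑ n ∈ range (k + 1), Λ n * q ^ (k - n) := ENNReal.tsum_le_tsum hk
    _ = (∑' n, Λ n) * ∑' m, q ^ m :=
        (ENNReal.tsum_mul_tsum_eq_tsum_sum_range _ _).symm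
    _ ≤ ENNReal.ofReal (C * exp θ * exp (-θ * v) * exp t) *
          (1 - ENNReal.ofReal (exp (t - θ)))⁻¹ * (1 - q)⁻¹ := by
        rw [ENNReal.tsum_geometric]
        gcongr
        exact tsum_setLIntegral_firstPassage_le hX hC ht htail v
    _ = _ := by
        rw [mul_right_comm _ (exp (-θ * v)), ENNReal.ofReal_mul (by positivity)]
        ring

section Perturbed

variable [IsProbabilityMeasure P] {ξ : ℕ → Ω → ℝ}

theorem measure_mem_and_lt_add_eq_lintegral (hX : ∀ i, Measurable (X i))
    (hξ : ∀ k, Measurable (ξ k)) (hXξ : IndepFun (fun ω n => X n ω) (fun ω n => ξ n ω) P)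
    (hidξ : ∀ k, IdentDistrib (ξ k) (ξ 0) P P) {A : Set (ℕ → ℝ)} (hA : MeasurableSet A)
    (n : ℕ) (x : ℝ) :
    P {ω | (fun i => X i ω) ∈ A ∧ x < ∑ i ∈ range n, X i ω + ξ n ω} =
      ∫⁻ s, P {ω | (fun i => X i ω) ∈ A ∧ x - s < ∑ i ∈ range n, X i ω} ∂(P.map (ξ 0)) := by
  have hE : MeasurableSet {p : (ℕ → ℝ) × ℝ | p.1 ∈ A ∧ x < ∑ i ∈ range n, p.1 i + p.2} :=
    (measurable_fst hA).inter (measurableSet_lt measurable_const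
      ((Finset.measurable_sum _ fun i _ => (measurable_pi_apply i).comp measurable_fst).add
        measurable_snd))
  refine ((hXξ.comp measurable_id (measurable_pi_apply n)).measure_mem_eq_lintegral
    (measurable_pi_lambda _ hX) (hξ n) hE).trans ?_
  simp only [(hidξ n).map_eq, Set.mem_ofPred_eq, sub_lt_iff_lt_add]

theorem measure_exists_lt_sum_range_add_le (hX : ∀ i, Measurable (X i))
    (hξ : ∀ k, Measurable (ξ k)) (hXξ : IndepFun (fun ω n => X n ω) (fun ω n => ξ n ω) P)
    (hidξ : ∀ k, IdentDistrib (ξ k) (ξ 0) P P) {θ : ℝ} {D : ℝ≥0∞}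
    (hocc : ∀ v, ∑' k, P {ω | v < ∑ i ∈ range k, X i ω} ≤ D * ENNReal.ofReal (exp (-θ * v)))
    (x : ℝ) :
    P {ω | ∃ k, x < ∑ i ∈ range k, X i ω + ξ k ω} ≤
      D * (∫⁻ s, ENNReal.ofReal (exp (θ * s)) ∂(P.map (ξ 0))) * ENNReal.ofReal (exp (-θ * x)) := by
  have hmeas (k : ℕ) : Measurable fun s => P {ω | x - s < ∑ i ∈ range k, X i ω} :=
    Monotone.measurable fun s s' h => measure_mono (Set.ofPred_subset_ofPred.mpr fun ω hω => by
      linarith)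
  calc P {ω | ∃ k, x < ∑ i ∈ range k, X i ω + ξ k ω}
      ≤ ∑' k, P {ω | x < ∑ i ∈ range k, X i ω + ξ k ω} := by
        rw [Set.ofPred_exists]; exact measure_iUnion_le _
    _ = ∫⁻ s, ∑' k, P {ω | x - s < ∑ i ∈ range k, X i ω} ∂(P.map (ξ 0)) := by
        rw [lintegral_tsum fun k => (hmeas k).aemeasurable]
        refine tsum_congr fun k => ?_
        simpa using measure_mem_and_lt_add_eq_lintegral hX hξ hXξ hidξ MeasurableSet.univ k x
    _ ≤ ∫⁻ s, D * ENNReal.ofReal (exp (θ * s)) * ENNReal.ofReal (exp (-θ * x)) ∂(P.map (ξ 0)) :=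
        lintegral_mono fun s => (hocc (x - s)).trans_eq (by
          rw [mul_assoc, ← ENNReal.ofReal_mul (exp_pos _).le, ← exp_add]
          ring_nf)
    _ = _ := by
        rw [lintegral_mul_const' _ _ ENNReal.ofReal_ne_top,
          lintegral_const_mul _ (measurable_const_mul θ).exp.ennreal_ofReal]

theorem lintegral_measure_exists_lt_le (hX : ∀ i, Measurable (X i))
    (hξ : ∀ k, Measurable (ξ k)) (hXξ : IndepFun (fun ω n => X n ω) (fun ω n => ξ n ω) P)
    (hidξ : ∀ k, IdentDistrib (ξ k) (ξ 0) P P)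
    (harg : ∀ᵐ ω ∂P, ∃ n, ∀ m, ∑ i ∈ range m, X i ω ≤ ∑ i ∈ range n, X i ω) (x : ℝ) :
    ∫⁻ s, P {ω | ∃ n, x - s < ∑ i ∈ range n, X i ω} ∂(P.map (ξ 0)) ≤
      P {ω | ∃ k, x < ∑ i ∈ range k, X i ω + ξ k ω} := by
  -- `E n`: the paths whose partial sums attain their maximum for the first time at `n`
  set E : ℕ → Set (ℕ → ℝ) :=
    disjointed fun n => {y | ∀ m, ∑ i ∈ range m, y i ≤ ∑ i ∈ range n, y i}
  have hsum (m : ℕ) : Measurable fun y : ℕ → ℝ => ∑ i ∈ range m, y i :=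
    Finset.measurable_sum _ fun i _ => measurable_pi_apply i
  have hE : ∀ n, MeasurableSet (E n) := MeasurableSet.disjointed fun n => by
    simp only [Set.ofPred_forall]
    exact MeasurableSet.iInter fun m => measurableSet_le (hsum m) (hsum n)
  have hmeas (n : ℕ) : Measurable fun s =>
      P {ω | (fun i => X i ω) ∈ E n ∧ x - s < ∑ i ∈ range n, X i ω} :=
    Monotone.measurable fun s s' h => measure_mono (Set.ofPred_subset_ofPred.mpr fun ω hω =>
      ⟨hω.1, by linarith [hω.2]⟩)
  have hcover (s : ℝ) : P {ω | ∃ n, x - s < ∑ i ∈ range n, X i ω} ≤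
      ∑' n, P {ω | (fun i => X i ω) ∈ E n ∧ x - s < ∑ i ∈ range n, X i ω} := by
    refine (measure_mono_ae ?_).trans (measure_iUnion_le _)
    filter_upwards [harg] with ω ⟨n₀, hn₀⟩ ⟨m, hm⟩
    obtain ⟨n, hn⟩ : ∃ n, (fun i => X i ω) ∈ E n := by
      rw [← Set.mem_iUnion, iUnion_disjointed]
      exact Set.mem_iUnion.mpr ⟨n₀, hn₀⟩
    exact Set.mem_iUnion.mpr ⟨n, hn, hm.trans_le (disjointed_subset _ n hn m)⟩
  calc ∫⁻ s, P {ω | ∃ n, x - s < ∑ i ∈ range n, X i ω} ∂(P.map (ξ 0))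
      ≤ ∫⁻ s, ∑' n, P {ω | (fun i => X i ω) ∈ E n ∧ x - s < ∑ i ∈ range n, X i ω}
          ∂(P.map (ξ 0)) := lintegral_mono hcover
    _ = ∑' n, P {ω | (fun i => X i ω) ∈ E n ∧ x < ∑ i ∈ range n, X i ω + ξ n ω} := by
        rw [lintegral_tsum fun n => (hmeas n).aemeasurable]
        exact tsum_congr fun n =>
          (measure_mem_and_lt_add_eq_lintegral hX hξ hXξ hidξ (hE n) n x).symm
    _ = P (⋃ n, {ω | (fun i => X i ω) ∈ E n ∧ x < ∑ i ∈ range n, X i ω + ξ n ω}) :=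
        (measure_iUnion (fun m n hmn => ((disjoint_disjointed _ hmn).preimage _).mono
          (fun _ h => h.1) (fun _ h => h.1)) fun n =>
          ((measurable_pi_lambda _ hX) (hE n)).inter (measurableSet_lt measurable_const
            ((Finset.measurable_sum _ fun i _ => hX i).add (hξ n)))).symm
    _ ≤ P {ω | ∃ k, x < ∑ i ∈ range k, X i ω + ξ k ω} :=
        measure_mono fun ω hω => by
          obtain ⟨n, hn⟩ := Set.mem_iUnion.mp hω
          exact ⟨n, hn.2⟩

end Perturbed

end RandomWalk

open RandomWalk

/-- If the unperturbed walk satisfies the Cramér–Lundberg asymptotic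
`P(max_n S_n > x) ~ r e^{-θ* x}` and the stationary perturbations (independent of
the walk) satisfy `E[exp (θ* ξ₀)] < ∞`, then
`liminf_{x→∞} e^{θ* x} P(M_∞ > x) ≥ r E[exp (θ* ξ₀)]`. -/
theorem liminf_tail_perturbed_random_walk
    {Ω : Type*} [MeasurableSpace Ω] (P : Measure Ω) [IsProbabilityMeasure P]
    (X : ℕ → Ω → ℝ) (ξ : ℕ → Ω → ℝ)
    (hXmeas : ∀ i, Measurable (X i)) (hξmeas : ∀ j, Measurable (ξ j))
    (hindep : iIndepFun X P)
    (hident : ∀ i, IdentDistrib (X i) (X 0) P P)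
    (hstat : ∀ k : ℕ, IdentDistrib (fun ω => fun j : ℕ => ξ (j + k) ω)
      (fun ω => fun j : ℕ => ξ j ω) P P)
    (hXξindep : IndepFun (fun ω => fun n : ℕ => X n ω)
      (fun ω => fun n : ℕ => ξ n ω) P)
    (θ r : ℝ) (hθ : 0 < θ) (hr : 0 < r)
    (hCL : Tendsto (fun x : ℝ => Real.exp (θ * x) *
        (P {ω | ∃ n : ℕ, (∑ i ∈ Finset.range n, X i ω) > x}).toReal)
      atTop (nhds r))
    (hξexp : Integrable (fun ω => Real.exp (θ * ξ 0 ω)) P) :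
    r * ∫ ω, Real.exp (θ * ξ 0 ω) ∂P ≤
      Filter.liminf (fun x : ℝ => Real.exp (θ * x) *
        (P {ω | ∃ k : ℕ, (∑ i ∈ Finset.range k, X i ω) + ξ k ω > x}).toReal)
        atTop := by
  have hidξ (k : ℕ) : IdentDistrib (ξ k) (ξ 0) P P := by
    simpa [Function.comp_def] using (hstat k).comp (measurable_pi_apply 0)
  obtain ⟨C, hC, htail⟩ :=
    exists_le_ofReal_mul_exp_neg_of_tendsto hθ.le (fun _ => prob_le_one) hCL
  have hρ : mgf (X 0) P (θ / 4) < 1 := mgf_lt_one hXmeas hindep hident hC (by positivity)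
    (by linarith) htail (not_ae_eq_zero_of_tendsto hident hr.ne' hCL)
  have hint : Integrable (fun ω => exp (θ / 4 * X 0 ω)) P :=
    integrable_exp_mul hXmeas hC (by positivity) (by linarith) htail
  obtain ⟨D, hD, hocc⟩ := exists_tsum_measure_lt_sum_range_le hXmeas hindep hident hC
    (by positivity) (by linarith) hint hρ htail
  have hξ0 : ∫⁻ s, ENNReal.ofReal (exp (θ * s)) ∂(P.map (ξ 0)) =
      ENNReal.ofReal (∫ ω, exp (θ * ξ 0 ω) ∂P) := by
    rw [lintegral_map (measurable_const_mul θ).exp.ennreal_ofReal (hξmeas 0),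
      ofReal_integral_eq_lintegral_ofReal hξexp (ae_of_all _ fun ω => (exp_pos _).le)]
  refine le_liminf_exp_mul_toReal (ENNReal.mul_ne_top hD (hξ0 ▸ ENNReal.ofReal_ne_top))
    (measure_exists_lt_sum_range_add_le hXmeas hξmeas hXξindep hidξ hocc) ?_
  calc ENNReal.ofReal (r * ∫ ω, exp (θ * ξ 0 ω) ∂P)
      = ENNReal.ofReal r * ∫⁻ s, ENNReal.ofReal (exp (θ * s)) ∂(P.map (ξ 0)) := by
        rw [hξ0, ENNReal.ofReal_mul hr.le]
    _ ≤ liminf (fun x => ENNReal.ofReal (exp (θ * x)) *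
          ∫⁻ s, P {ω | ∃ n, x - s < ∑ i ∈ range n, X i ω} ∂(P.map (ξ 0))) atTop :=
        ofReal_mul_lintegral_le_liminf (F := fun v => P {ω | ∃ n, v < ∑ i ∈ range n, X i ω})
          (fun v w hvw => measure_mono fun ω ⟨n, hn⟩ => ⟨n, hvw.trans_lt hn⟩)
          (fun _ => measure_ne_top _ _) hCL
    _ ≤ _ := liminf_le_liminf (Eventually.of_forall fun x => mul_le_mul_right
        (lintegral_measure_exists_lt_le hXmeas hξmeas hXξindep hidξ
          (ae_exists_forall_sum_range_le hXmeas hindep hident (by positivity) hint hρ) x) _)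
end
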